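/- arXiv:2603.07075 — 4 statements merged into one kernel-verified Lean document; each statement's English description precedes it below -/
import Mathlib

section
/- With H, M, Q as above, L = max{L_f, L_g}, and R a symmetric positive semidefinite (m+n)×(m+n) matrix, for any s > 0 and all z₁, z₂: |⟨QR(H(z₁) − H(z₂)), z₁ − z₂⟩| ≥ −(‖R‖/(2s))⟨M(z₁) − M(z₂), z₁ − z₂⟩ − (sL/2)‖Q(z₁ − z₂)‖²_R, i.e., ⟨QR(H(z₁) − H(z₂)), z₁ − z₂⟩ ≥ −(‖R‖/(2s))⟨M(z₁) − M(z₂), z₁ − z₂⟩ − (sL/2)⟨RQ(z₁ − z₂), Q(z₁ − z₂)⟩. -/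
open scoped InnerProductSpace Topology
open Set Filter

section Aux

variable {E : Type*} [NormedAddCommGroup E] [InnerProductSpace ℝ E] [CompleteSpace E]
variable {f : E → ℝ} {g : E → E} {c : ℝ}

lemma aux_line_deriv (hg : ∀ x, HasGradientAt f (g x) x) (x v : E) (t : ℝ) :
    HasDerivAt (fun t : ℝ => f (x + t • v)) ⟪g (x + t • v), v⟫_ℝ t := by
  have h1 : HasDerivAt (fun t : ℝ => x + t • v) v t := by
    simpa using ((hasDerivAt_id t).smul_const v).const_add x
  have h2 : HasFDerivAt f (InnerProductSpace.toDual ℝ E (g (x + t • v))) (x + t • v) := hg _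
  have h3 := h2.comp_hasDerivAt t h1
  simp at h3
  exact h3

lemma aux_convex_lb (hconv : ConvexOn ℝ Set.univ f) (hg : ∀ x, HasGradientAt f (g x) x)
    (x y : E) : f x + ⟪g x, y - x⟫_ℝ ≤ f y := by
  set v := y - x with hv
  have hD : HasDerivAt (fun t : ℝ => f (x + t • v)) ⟪g x, v⟫_ℝ 0 := by
    simpa using aux_line_deriv hg x v 0
  have hT : Tendsto (slope (fun t : ℝ => f (x + t • v)) 0) (𝓝[>] 0) (𝓝 ⟪g x, v⟫_ℝ) :=
    (hasDerivAt_iff_tendsto_slope.1 hD).mono_left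
      (nhdsWithin_mono _ (fun t ht => ne_of_gt ht))
  have hle : ⟪g x, v⟫_ℝ ≤ f y - f x := by
    refine le_of_tendsto hT ?_
    filter_upwards [Ioo_mem_nhdsGT_of_mem (by norm_num : (0:ℝ) ∈ Ico (0:ℝ) 1)] with t ht
    have hxy : x + t • v = (1 - t) • x + t • y := by rw [hv]; module
    have hc := hconv.2 (mem_univ x) (mem_univ y)
      (by linarith [ht.2] : (0:ℝ) ≤ 1 - t) (le_of_lt ht.1) (by ring)
    simp only [smul_eq_mul] at hc
    rw [slope_def_field, hxy]
    simp only [zero_smul, add_zero, sub_zero]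
    rw [div_le_iff₀ ht.1]
    calc f ((1 - t) • x + t • y) - f x ≤ (1 - t) * f x + t * f y - f x := by linarith [hc]
    _ = (f y - f x) * t := by ring
  linarith

lemma aux_descent (hg : ∀ x, HasGradientAt f (g x) x)
    (hlip : ∀ a b, ‖g a - g b‖ ≤ c * ‖a - b‖) (x y : E) :
    f y ≤ f x + ⟪g x, y - x⟫_ℝ + c / 2 * ‖y - x‖ ^ 2 := by
  set v := y - x with hv
  set ψ : ℝ → ℝ := fun t => f (x + t • v) - t * ⟪g x, v⟫_ℝ - c / 2 * t ^ 2 * ‖v‖ ^ 2 with hψ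
  have hDψ : ∀ t : ℝ, HasDerivAt ψ
      (⟪g (x + t • v), v⟫_ℝ - ⟪g x, v⟫_ℝ - c * t * ‖v‖ ^ 2) t := by
    intro t
    have h1 := aux_line_deriv hg x v t
    have h2 : HasDerivAt (fun t : ℝ => t * ⟪g x, v⟫_ℝ) ⟪g x, v⟫_ℝ t := by
      simpa using (hasDerivAt_id t).mul_const ⟪g x, v⟫_ℝ
    have h3 : HasDerivAt (fun t : ℝ => c / 2 * t ^ 2 * ‖v‖ ^ 2) (c * t * ‖v‖ ^ 2) t := by
      have := ((hasDerivAt_pow 2 t).const_mul (c / 2)).mul_const (‖v‖ ^ 2)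
      exact this.congr_deriv (by rw [show (2:ℕ) - 1 = 1 from rfl]; push_cast; ring)
    exact (h1.sub h2).sub h3
  have hψ' : ∀ t ∈ interior (Icc (0:ℝ) 1), deriv ψ t ≤ 0 := by
    intro t ht
    rw [interior_Icc] at ht
    rw [(hDψ t).deriv]
    have h4 : ⟪g (x + t • v) - g x, v⟫_ℝ ≤ c * t * ‖v‖ ^ 2 := by
      calc ⟪g (x + t • v) - g x, v⟫_ℝ ≤ ‖g (x + t • v) - g x‖ * ‖v‖ :=
            real_inner_le_norm _ _
      _ ≤ (c * ‖(x + t • v) - x‖) * ‖v‖ := by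
            have := hlip (x + t • v) x
            nlinarith [norm_nonneg v]
      _ = c * t * ‖v‖ ^ 2 := by
            simp [norm_smul, abs_of_pos ht.1]; ring
    rw [inner_sub_left] at h4
    linarith
  have hanti : AntitoneOn ψ (Icc (0:ℝ) 1) := by
    refine antitoneOn_of_deriv_nonpos (convex_Icc 0 1) ?_ ?_ hψ'
    · exact (fun t _ => ((hDψ t).differentiableAt).continuousAt.continuousWithinAt)
    · exact fun t _ => ((hDψ t).differentiableAt).differentiableWithinAt
  have := hanti (by norm_num : (0:ℝ) ∈ Icc (0:ℝ) 1) (by norm_num : (1:ℝ) ∈ Icc (0:ℝ) 1)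
    (by norm_num)
  simp only [hψ, zero_smul, add_zero, one_smul, zero_mul, zero_pow, mul_zero, sub_zero,
    one_mul, one_pow, mul_one] at this
  have hxy : x + v = y := by rw [hv]; abel
  rw [hxy] at this
  linarith

lemma aux_lb_strong (hconv : ConvexOn ℝ Set.univ f) (hg : ∀ x, HasGradientAt f (g x) x)
    (hlip : ∀ a b, ‖g a - g b‖ ≤ c * ‖a - b‖) (hc : 0 < c) (x y : E) :
    f x + ⟪g x, y - x⟫_ℝ + 1 / (2 * c) * ‖g y - g x‖ ^ 2 ≤ f y := by
  set z := y - (1 / c) • (g y - g x) with hz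
  have h1 := aux_convex_lb hconv hg x z
  have h2 := aux_descent hg hlip y z
  have e1 : z - y = -((1 / c) • (g y - g x)) := by rw [hz]; abel
  have e2 : ⟪g y, z - y⟫_ℝ = -(1 / c) * ⟪g y, g y - g x⟫_ℝ := by
    rw [e1, inner_neg_right, real_inner_smul_right]; ring
  have e3 : ‖z - y‖ ^ 2 = (1 / c) ^ 2 * ‖g y - g x‖ ^ 2 := by
    rw [e1, norm_neg, norm_smul]
    rw [Real.norm_eq_abs, abs_of_pos (by positivity : (0:ℝ) < 1 / c)]
    rw [mul_pow]
  have e4 : ⟪g x, z - x⟫_ℝ = ⟪g x, y - x⟫_ℝ - (1 / c) * ⟪g x, g y - g x⟫_ℝ := by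
    have : z - x = (y - x) - (1 / c) • (g y - g x) := by rw [hz]; abel
    rw [this, inner_sub_right, real_inner_smul_right]
  have e5 : ⟪g y, g y - g x⟫_ℝ - ⟪g x, g y - g x⟫_ℝ = ‖g y - g x‖ ^ 2 := by
    rw [← inner_sub_left, real_inner_self_eq_norm_sq]
  rw [e4] at h1
  rw [e2, e3] at h2
  have hcne : c ≠ 0 := ne_of_gt hc
  have hq : c / 2 * ((1 / c) ^ 2 * ‖g y - g x‖ ^ 2) = 1 / (2 * c) * ‖g y - g x‖ ^ 2 := by
    field_simp
  have hE : 1 / c * ⟪g y, g y - g x⟫_ℝ - 1 / c * ⟪g x, g y - g x⟫_ℝ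
      = 1 / c * ‖g y - g x‖ ^ 2 := by rw [← mul_sub, e5]
  have hr : 1 / c * ‖g y - g x‖ ^ 2 = 2 * (1 / (2 * c) * ‖g y - g x‖ ^ 2) := by
    field_simp
  linarith

lemma aux_coco (hconv : ConvexOn ℝ Set.univ f) (hg : ∀ x, HasGradientAt f (g x) x)
    (hlip : ∀ a b, ‖g a - g b‖ ≤ c * ‖a - b‖) (hc : 0 < c) (x y : E) :
    1 / c * ‖g x - g y‖ ^ 2 ≤ ⟪g x - g y, x - y⟫_ℝ := by
  have h1 := aux_lb_strong hconv hg hlip hc x y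
  have h2 := aux_lb_strong hconv hg hlip hc y x
  have e1 : ⟪g x, y - x⟫_ℝ + ⟪g y, x - y⟫_ℝ = -⟪g x - g y, x - y⟫_ℝ := by
    rw [inner_sub_left]
    have : ⟪g x, y - x⟫_ℝ = -⟪g x, x - y⟫_ℝ := by
      rw [← inner_neg_right]; congr 1; abel
    rw [this]; ring
  have e2 : ‖g y - g x‖ = ‖g x - g y‖ := by rw [← norm_neg]; congr 1; abel
  rw [e2] at h1
  have hr : 1 / c * ‖g x - g y‖ ^ 2 = 2 * (1 / (2 * c) * ‖g x - g y‖ ^ 2) := by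
    have hcne : c ≠ 0 := ne_of_gt hc
    field_simp
  linarith

end Aux

set_option maxHeartbeats 1000000 in
theorem stmt7 {n m : ℕ}
    (F : EuclideanSpace ℝ (Fin n) → ℝ) (G : EuclideanSpace ℝ (Fin m) → ℝ)
    (gF : EuclideanSpace ℝ (Fin n) → EuclideanSpace ℝ (Fin n))
    (gG : EuclideanSpace ℝ (Fin m) → EuclideanSpace ℝ (Fin m))
    (A : EuclideanSpace ℝ (Fin n) →L[ℝ] EuclideanSpace ℝ (Fin m))
    (Lf Lg L s : ℝ) (hLf : 0 < Lf) (hLg : 0 < Lg) (hL : L = max Lf Lg) (hs : 0 < s)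
    (hFconv : ConvexOn ℝ Set.univ F) (hGconv : ConvexOn ℝ Set.univ G)
    (hFgrad : ∀ x, HasGradientAt F (gF x) x)
    (hGgrad : ∀ y, HasGradientAt G (gG y) y)
    (hFlip : ∀ x y, ‖gF x - gF y‖ ≤ Lf * ‖x - y‖)
    (hGlip : ∀ x y, ‖gG x - gG y‖ ≤ Lg * ‖x - y‖)
    (Q R : WithLp 2 (EuclideanSpace ℝ (Fin n) × EuclideanSpace ℝ (Fin m)) →L[ℝ]
           WithLp 2 (EuclideanSpace ℝ (Fin n) × EuclideanSpace ℝ (Fin m)))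
    (hQ : ∀ z, (WithLp.equiv 2 _) (Q z) =
      ((ContinuousLinearMap.adjoint A) ((WithLp.equiv 2 _) z).2, -(A ((WithLp.equiv 2 _) z).1)))
    (hRsym : IsSelfAdjoint R) (hRpsd : ∀ z, 0 ≤ ⟪R z, z⟫_ℝ)
    (H M : WithLp 2 (EuclideanSpace ℝ (Fin n) × EuclideanSpace ℝ (Fin m)) →
           WithLp 2 (EuclideanSpace ℝ (Fin n) × EuclideanSpace ℝ (Fin m)))
    (hH : ∀ z, H z = (WithLp.equiv 2 _).symm (gF ((WithLp.equiv 2 _) z).1, gG ((WithLp.equiv 2 _) z).2))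
    (hM : ∀ z, M z = H z + Q z) :
    ∀ z₁ z₂,
      ⟪Q (R (H z₁ - H z₂)), z₁ - z₂⟫_ℝ ≥
        -(‖R‖ / (2 * s)) * ⟪M z₁ - M z₂, z₁ - z₂⟫_ℝ
        - (s * L / 2) * ⟪R (Q (z₁ - z₂)), Q (z₁ - z₂)⟫_ℝ := by
  intro z₁ z₂
  have hLpos : 0 < L := by rw [hL]; exact lt_of_lt_of_le hLf (le_max_left _ _)
  have hQf : ∀ a, (Q a).fst = (ContinuousLinearMap.adjoint A) a.snd := by
    intro a
    have := congrArg Prod.fst (hQ a)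
    simpa using this
  have hQs : ∀ a, (Q a).snd = -(A a.fst) := by
    intro a
    have := congrArg Prod.snd (hQ a)
    simpa using this
  have hskew : ∀ a b, ⟪Q a, b⟫_ℝ = -⟪a, Q b⟫_ℝ := by
    intro a b
    rw [WithLp.prod_inner_apply, WithLp.prod_inner_apply]
    simp only [WithLp.ofLp_fst, WithLp.ofLp_snd]
    rw [hQf, hQs, hQf, hQs,
      ContinuousLinearMap.adjoint_inner_left]
    have : ⟪a.fst, (ContinuousLinearMap.adjoint A) b.snd⟫_ℝ = ⟪A a.fst, b.snd⟫_ℝ := by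
      rw [real_inner_comm, ContinuousLinearMap.adjoint_inner_left, real_inner_comm]
    rw [this, inner_neg_left, inner_neg_right]
    ring
  have hQself : ∀ a, ⟪Q a, a⟫_ℝ = 0 := by
    intro a
    have h1 := hskew a a
    have h2 := real_inner_comm a (Q a)
    linarith
  have hsym : ∀ a b, ⟪R a, b⟫_ℝ = ⟪R b, a⟫_ℝ := by
    intro a b
    nth_rewrite 1 [← ContinuousLinearMap.isSelfAdjoint_iff'.1 hRsym]
    rw [ContinuousLinearMap.adjoint_inner_left, real_inner_comm]
  set d := z₁ - z₂ with hd
  set h := H z₁ - H z₂ with hh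
  have hhf : h.fst = gF z₁.fst - gF z₂.fst := by
    rw [hh, WithLp.sub_fst, hH, hH]
    simp
  have hhs : h.snd = gG z₁.snd - gG z₂.snd := by
    rw [hh, WithLp.sub_snd, hH, hH]
    simp
  have hdf : d.fst = z₁.fst - z₂.fst := by rw [hd, WithLp.sub_fst]
  have hds : d.snd = z₁.snd - z₂.snd := by rw [hd, WithLp.sub_snd]
  -- cocoercivity on components
  have c1 := aux_coco hFconv hFgrad hFlip hLf z₁.fst z₂.fst
  have c2 := aux_coco hGconv hGgrad hGlip hLg z₁.snd z₂.snd
  have i1nn : (0:ℝ) ≤ ⟪gF z₁.fst - gF z₂.fst, z₁.fst - z₂.fst⟫_ℝ :=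
    le_trans (by positivity) c1
  have i2nn : (0:ℝ) ≤ ⟪gG z₁.snd - gG z₂.snd, z₁.snd - z₂.snd⟫_ℝ :=
    le_trans (by positivity) c2
  have c1' : ‖gF z₁.fst - gF z₂.fst‖ ^ 2 ≤ Lf * ⟪gF z₁.fst - gF z₂.fst, z₁.fst - z₂.fst⟫_ℝ := by
    have := mul_le_mul_of_nonneg_left c1 (le_of_lt hLf)
    rw [← mul_assoc, mul_one_div, div_self (ne_of_gt hLf), one_mul] at this
    exact this
  have c2' : ‖gG z₁.snd - gG z₂.snd‖ ^ 2 ≤ Lg * ⟪gG z₁.snd - gG z₂.snd, z₁.snd - z₂.snd⟫_ℝ := by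
    have := mul_le_mul_of_nonneg_left c2 (le_of_lt hLg)
    rw [← mul_assoc, mul_one_div, div_self (ne_of_gt hLg), one_mul] at this
    exact this
  have hinner_hd : ⟪h, d⟫_ℝ =
      ⟪gF z₁.fst - gF z₂.fst, z₁.fst - z₂.fst⟫_ℝ
      + ⟪gG z₁.snd - gG z₂.snd, z₁.snd - z₂.snd⟫_ℝ := by
    rw [WithLp.prod_inner_apply]
    simp only [WithLp.ofLp_fst, WithLp.ofLp_snd]
    rw [hhf, hhs, hdf, hds]
  have hnorm_h : ‖h‖ ^ 2 =
      ‖gF z₁.fst - gF z₂.fst‖ ^ 2 + ‖gG z₁.snd - gG z₂.snd‖ ^ 2 := by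
    rw [WithLp.prod_norm_sq_eq_of_L2, hhf, hhs]
  have key1 : ‖h‖ ^ 2 ≤ L * ⟪h, d⟫_ℝ := by
    have e1 : Lf * ⟪gF z₁.fst - gF z₂.fst, z₁.fst - z₂.fst⟫_ℝ
        ≤ L * ⟪gF z₁.fst - gF z₂.fst, z₁.fst - z₂.fst⟫_ℝ :=
      mul_le_mul_of_nonneg_right (hL ▸ le_max_left _ _) i1nn
    have e2 : Lg * ⟪gG z₁.snd - gG z₂.snd, z₁.snd - z₂.snd⟫_ℝ
        ≤ L * ⟪gG z₁.snd - gG z₂.snd, z₁.snd - z₂.snd⟫_ℝ :=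
      mul_le_mul_of_nonneg_right (hL ▸ le_max_right _ _) i2nn
    rw [hnorm_h, hinner_hd, mul_add]
    linarith
  have hhd_nn : (0:ℝ) ≤ ⟪h, d⟫_ℝ := by rw [hinner_hd]; linarith
  have key2 : ⟪M z₁ - M z₂, d⟫_ℝ = ⟪h, d⟫_ℝ := by
    have : M z₁ - M z₂ = h + Q d := by
      rw [hM, hM, hh, hd, map_sub]; abel
    rw [this, inner_add_left, hQself]
    ring
  -- Cauchy-Schwarz for psd R with parameter t = s*L
  have e := hRpsd (h - (s * L) • (Q d))
  rw [map_sub, map_smul] at e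
  simp only [inner_sub_left, inner_sub_right, real_inner_smul_left, real_inner_smul_right] at e
  rw [hsym (Q d) h] at e
  obtain ⟨X, hX⟩ : ∃ X, ⟪R h, Q d⟫_ℝ = X := ⟨_, rfl⟩
  obtain ⟨Y, hY⟩ : ∃ Y, ⟪R (Q d), Q d⟫_ℝ = Y := ⟨_, rfl⟩
  obtain ⟨W, hW⟩ : ∃ W, ⟪R h, h⟫_ℝ = W := ⟨_, rfl⟩
  obtain ⟨I, hI⟩ : ∃ I, ⟪h, d⟫_ℝ = I := ⟨_, rfl⟩
  rw [hX, hY, hW] at e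
  -- bound ⟪R h, h⟫
  have hRhh : W ≤ ‖R‖ * (L * I) := by
    rw [← hW, ← hI]
    calc ⟪R h, h⟫_ℝ ≤ ‖R h‖ * ‖h‖ := real_inner_le_norm _ _
    _ ≤ (‖R‖ * ‖h‖) * ‖h‖ :=
        mul_le_mul_of_nonneg_right (R.le_opNorm h) (norm_nonneg _)
    _ = ‖R‖ * ‖h‖ ^ 2 := by ring
    _ ≤ ‖R‖ * (L * ⟪h, d⟫_ℝ) := mul_le_mul_of_nonneg_left key1 (norm_nonneg _)
  have hrhs : 2 * (s * L) * ((‖R‖ / (2 * s)) * I + (s * L / 2) * Y)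
      = ‖R‖ * (L * I) + (s * L) * ((s * L) * Y) := by
    have h2s : (2 * s) * (‖R‖ / (2 * s)) = ‖R‖ := mul_div_cancel₀ _ (by positivity)
    rw [show 2 * (s * L) * ((‖R‖ / (2 * s)) * I + (s * L / 2) * Y)
        = L * ((2 * s) * (‖R‖ / (2 * s))) * I + (s * L) * ((s * L) * Y)
        from by ring, h2s]
    ring
  have hchain : 2 * (s * L) * X
      ≤ 2 * (s * L) * ((‖R‖ / (2 * s)) * I + (s * L / 2) * Y) := by
    rw [hrhs]
    nlinarith [e, hRhh]
  have hXle : X ≤ (‖R‖ / (2 * s)) * I + (s * L / 2) * Y :=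
    le_of_mul_le_mul_left hchain (by positivity)
  rw [ge_iff_le, hskew (R h) d, key2]
  rw [hX]
  rw [hY]
  rw [hI]
  linarith
end

section
/- Let 𝓖(Z) = −M(Z) + (s/2)Q(η₁ I + 2η₂ I_θ) M(Z), where M(z) = H(z) + Qz with H as above, I_θ = diag(θI, −I), θ ≥ −1, and 2η₂ < η₁ < 4 − 2θη₂ with η₁, η₂ > 0. If 0 < s < 2/L with L = max{L_f, L_g} and Z* ∈ M⁻¹(0), then −⟨Z − Z*, 𝓖(Z)⟩ ≥ ((4 − η₁ − 2θη₂)/4)⟨M(Z), Z − Z*⟩ + (s(2 − sL)/4)(η₁ − 2η₂)‖Q(Z − Z*)‖² for all Z. -/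
open scoped InnerProductSpace


section Coco
variable {E : Type*} [NormedAddCommGroup E] [InnerProductSpace ℝ E] [CompleteSpace E]

lemma myLineDeriv (F : E → ℝ) (g : E → E) (hg : ∀ p, HasGradientAt F (g p) p)
    (x v : E) (t : ℝ) :
    HasDerivAt (fun t : ℝ => F (x + t • v)) ⟪g (x + t • v), v⟫_ℝ t := by
  have hline : HasDerivAt (fun t : ℝ => x + t • v) v t := by
    simpa using ((hasDerivAt_id t).smul_const v).const_add x
  have hF : HasFDerivAt F (InnerProductSpace.toDual ℝ E (g (x + t • v))) (x + t • v) :=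
    hasGradientAt_iff_hasFDerivAt.mp (hg _)
  have h := hF.comp_hasDerivAt t hline
  simp at h
  exact h

/-- first-order condition for convexity -/
lemma tangent_le (F : E → ℝ) (g : E → E) (hconv : ConvexOn ℝ Set.univ F)
    (hg : ∀ p, HasGradientAt F (g p) p) (x y : E) :
    F x + ⟪g x, y - x⟫_ℝ ≤ F y := by
  set v := y - x with hv
  have hψconv : ConvexOn ℝ Set.univ (fun t : ℝ => F (x + t • v)) := by
    have := hconv.comp_affineMap (AffineMap.lineMap x y)
    have heq : (fun t : ℝ => F (x + t • v)) = F ∘ (AffineMap.lineMap x y) := by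
      funext t
      simp [AffineMap.lineMap_apply, hv]
      rw [add_comm]
    rw [heq]
    simpa using this
  have hder := myLineDeriv F g hg x v 0
  have := hψconv.le_slope_of_hasDerivAt (Set.mem_univ (0:ℝ)) (Set.mem_univ (1:ℝ))
    zero_lt_one hder
  rw [slope_def_field] at this
  simp at this ⊢
  calc F x + ⟪g x, y - x⟫_ℝ ≤ F x + (F (x + (y - x)) - F x) := by linarith
    _ = F y := by rw [show x + (y - x) = y from by abel]; ring

/-- descent lemma -/
lemma descent_le (F : E → ℝ) (g : E → E) (L : ℝ) (hL : 0 < L)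
    (hg : ∀ p, HasGradientAt F (g p) p)
    (hlip : ∀ x y, ‖g x - g y‖ ≤ L * ‖x - y‖) (x y : E) :
    F y ≤ F x + ⟪g x, y - x⟫_ℝ + L / 2 * ‖y - x‖ ^ 2 := by
  set v := y - x with hv
  set φ : ℝ → ℝ := fun t => F (x + t • v) - t * ⟪g x, v⟫_ℝ - L / 2 * t ^ 2 * ‖v‖ ^ 2 with hφ
  have hφder : ∀ t : ℝ, HasDerivAt φ
      (⟪g (x + t • v), v⟫_ℝ - ⟪g x, v⟫_ℝ - L * t * ‖v‖ ^ 2) t := by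
    intro t
    have h1 := myLineDeriv F g hg x v t
    have h2 : HasDerivAt (fun t : ℝ => t * ⟪g x, v⟫_ℝ) ⟪g x, v⟫_ℝ t := by
      simpa using (hasDerivAt_id t).mul_const ⟪g x, v⟫_ℝ
    have h3 : HasDerivAt (fun t : ℝ => L / 2 * t ^ 2 * ‖v‖ ^ 2) (L * t * ‖v‖ ^ 2) t := by
      have := (hasDerivAt_pow 2 t).const_mul (L / 2)
      have := this.mul_const (‖v‖ ^ 2)
      refine this.congr_deriv ?_
      ring
    exact (h1.sub h2).sub h3
  have hmono : AntitoneOn φ (Set.Icc (0:ℝ) 1) := by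
    apply antitoneOn_of_deriv_nonpos (convex_Icc 0 1)
    · exact fun t _ => ((hφder t).differentiableAt).continuousAt.continuousWithinAt
    · exact fun t _ => ((hφder t).differentiableAt).differentiableWithinAt
    · intro t ht
      rw [interior_Icc] at ht
      rw [(hφder t).deriv]
      have h1 : ⟪g (x + t • v) - g x, v⟫_ℝ ≤ ‖g (x + t • v) - g x‖ * ‖v‖ :=
        real_inner_le_norm _ _
      have h2 : ‖g (x + t • v) - g x‖ ≤ L * ‖t • v‖ := by
        simpa using hlip (x + t • v) x
      have h3 : ‖t • v‖ = t * ‖v‖ := by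
        rw [norm_smul, Real.norm_eq_abs, abs_of_pos ht.1]
      have h4 : ‖g (x + t • v) - g x‖ * ‖v‖ ≤ L * t * ‖v‖ * ‖v‖ := by
        apply mul_le_mul_of_nonneg_right _ (norm_nonneg v)
        calc ‖g (x + t • v) - g x‖ ≤ L * ‖t • v‖ := h2
          _ = L * t * ‖v‖ := by rw [h3]; ring
      rw [inner_sub_left] at h1
      nlinarith [h1, h4]
  have := hmono (Set.left_mem_Icc.mpr zero_le_one) (Set.right_mem_Icc.mpr zero_le_one) zero_le_one
  simp only [hφ] at this
  simp at this
  have hxy : x + v = y := by rw [hv]; abel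
  rw [hxy] at this
  linarith

/-- cocoercivity (Baillon–Haddad) -/
lemma coco (F : E → ℝ) (g : E → E) (L : ℝ) (hL : 0 < L)
    (hconv : ConvexOn ℝ Set.univ F)
    (hg : ∀ p, HasGradientAt F (g p) p)
    (hlip : ∀ x y, ‖g x - g y‖ ≤ L * ‖x - y‖) (x y : E) :
    ‖g x - g y‖ ^ 2 ≤ L * ⟪g x - g y, x - y⟫_ℝ := by
  set d := g y - g x with hd
  set z := y - L⁻¹ • d with hz
  set z' := x + L⁻¹ • d with hz'
  have h1 : F x + ⟪g x, z - x⟫_ℝ ≤ F z := tangent_le F g hconv hg x z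
  have h2 : F z ≤ F y + ⟪g y, z - y⟫_ℝ + L / 2 * ‖z - y‖ ^ 2 :=
    descent_le F g L hL hg hlip y z
  have h1' : F y + ⟪g y, z' - y⟫_ℝ ≤ F z' := tangent_le F g hconv hg y z'
  have h2' : F z' ≤ F x + ⟪g x, z' - x⟫_ℝ + L / 2 * ‖z' - x‖ ^ 2 :=
    descent_le F g L hL hg hlip x z'
  have hzy : z - y = -(L⁻¹ • d) := by rw [hz]; abel
  have hzx : z' - x = L⁻¹ • d := by rw [hz']; abel
  have hnorm : ‖z - y‖ ^ 2 = L⁻¹ ^ 2 * ‖d‖ ^ 2 := by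
    rw [hzy, norm_neg, norm_smul, Real.norm_eq_abs, abs_of_pos (inv_pos.mpr hL), mul_pow]
  have hnorm' : ‖z' - x‖ ^ 2 = L⁻¹ ^ 2 * ‖d‖ ^ 2 := by
    rw [hzx, norm_smul, Real.norm_eq_abs, abs_of_pos (inv_pos.mpr hL), mul_pow]
  -- combine:
  have key : ⟪g x, z - x⟫_ℝ + ⟪g y, z' - y⟫_ℝ ≤
      ⟪g y, z - y⟫_ℝ + ⟪g x, z' - x⟫_ℝ + L * (L⁻¹ ^ 2 * ‖d‖ ^ 2) := by
    nlinarith [h1, h2, h1', h2', hnorm, hnorm']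
  have e1 : ⟪g x, z - x⟫_ℝ - ⟪g x, z' - x⟫_ℝ = ⟪g x, z - z'⟫_ℝ := by
    rw [← inner_sub_right]; congr 1; abel
  have e2 : ⟪g y, z' - y⟫_ℝ - ⟪g y, z - y⟫_ℝ = ⟪g y, z' - z⟫_ℝ := by
    rw [← inner_sub_right]; congr 1; abel
  have e3 : ⟪g x, z - z'⟫_ℝ + ⟪g y, z' - z⟫_ℝ = ⟪g y - g x, z' - z⟫_ℝ := by
    rw [inner_sub_left]
    have : ⟪g x, z - z'⟫_ℝ = -⟪g x, z' - z⟫_ℝ := by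
      rw [← inner_neg_right]; congr 1; abel
    linarith [this]
  have hz'z : z' - z = (2 * L⁻¹) • d - (y - x) := by
    rw [hz', hz, two_mul, add_smul]; abel
  have e4 : ⟪g y - g x, z' - z⟫_ℝ = 2 * L⁻¹ * ‖d‖ ^ 2 - ⟪g y - g x, y - x⟫_ℝ := by
    rw [hz'z, inner_sub_right, inner_smul_right, ← hd, real_inner_self_eq_norm_sq]
  have hLL : L * (L⁻¹ ^ 2 * ‖d‖ ^ 2) = L⁻¹ * ‖d‖ ^ 2 := by
    field_simp
  have final : 2 * L⁻¹ * ‖d‖ ^ 2 - ⟪g y - g x, y - x⟫_ℝ ≤ L⁻¹ * ‖d‖ ^ 2 := by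
    rw [← e4, ← e3, ← e1, ← e2, ← hLL]; linarith [key]
  have hdd : ‖g x - g y‖ = ‖d‖ := by rw [hd, norm_sub_rev]
  have hinner : ⟪g x - g y, x - y⟫_ℝ = ⟪g y - g x, y - x⟫_ℝ := by
    rw [show g x - g y = -(g y - g x) by abel, show x - y = -(y - x) by abel,
      inner_neg_neg]
  rw [hdd, hinner]
  have : L⁻¹ * ‖d‖ ^ 2 ≤ ⟪g y - g x, y - x⟫_ℝ := by linarith
  calc ‖d‖ ^ 2 = L * (L⁻¹ * ‖d‖ ^ 2) := by field_simp
    _ ≤ L * ⟪g y - g x, y - x⟫_ℝ := by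
        apply mul_le_mul_of_nonneg_left this (le_of_lt hL)

end Coco



lemma scalarIneq (L s α β T₁ T₂ f g A B Ca Cb : ℝ)
    (hL : 0 < L) (hs : 0 < s) (hsL : s * L < 2) (hβ : 0 < β) (hαβ : β ≤ α)
    (hT₁ : f ^ 2 ≤ L * T₁) (hT₂ : g ^ 2 ≤ L * T₂)
    (hCa : -(A * f) ≤ Ca) (hCb : Cb ≤ B * g) :
    ((4 - α) / 4) * (T₁ + T₂) + (s * (2 - s * L) / 4) * β * (A ^ 2 + B ^ 2)
      ≤ T₁ + T₂ - (s / 2) * (β * (Cb - B ^ 2) - α * (Ca + A ^ 2)) := by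
  have hα : 0 < α := lt_of_lt_of_le hβ hαβ
  have hαβ' : (0:ℝ) ≤ α - β := by linarith
  have h2sL : (0:ℝ) ≤ 2 - s * L := by linarith
  have c1L : 0 ≤ L * (α * T₁ + 2 * s * α * Ca + (2 * s * α - s * (2 - s * L) * β) * A ^ 2) := by
    nlinarith [mul_nonneg hα.le (sq_nonneg (f - s * L * A)),
      mul_nonneg (mul_nonneg (mul_nonneg (mul_pos hs hL).le h2sL) hαβ') (sq_nonneg A),
      mul_le_mul_of_nonneg_left hCa (show (0:ℝ) ≤ 2 * s * α * L by positivity),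
      mul_le_mul_of_nonneg_left hT₁ hα.le]
  have c1 : 0 ≤ α * T₁ + 2 * s * α * Ca + (2 * s * α - s * (2 - s * L) * β) * A ^ 2 :=
    le_of_mul_le_mul_left (by linarith) hL
  have c2L : 0 ≤ L * (α * T₂ - 2 * s * β * Cb + (2 * s * β - s * (2 - s * L) * β) * B ^ 2) := by
    nlinarith [mul_nonneg hβ.le (sq_nonneg (g - s * L * B)),
      mul_nonneg hαβ' (sq_nonneg g),
      mul_le_mul_of_nonneg_left hCb (show (0:ℝ) ≤ 2 * s * β * L by positivity),
      mul_le_mul_of_nonneg_left hT₂ hα.le]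
  have c2 : 0 ≤ α * T₂ - 2 * s * β * Cb + (2 * s * β - s * (2 - s * L) * β) * B ^ 2 :=
    le_of_mul_le_mul_left (by linarith) hL
  nlinarith [c1, c2]

set_option maxHeartbeats 2000000 in
theorem stmt8 {n m : ℕ}
    (F : EuclideanSpace ℝ (Fin n) → ℝ) (G : EuclideanSpace ℝ (Fin m) → ℝ)
    (gF : EuclideanSpace ℝ (Fin n) → EuclideanSpace ℝ (Fin n))
    (gG : EuclideanSpace ℝ (Fin m) → EuclideanSpace ℝ (Fin m))
    (A : EuclideanSpace ℝ (Fin n) →L[ℝ] EuclideanSpace ℝ (Fin m))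
    (Lf Lg L s θ η₁ η₂ : ℝ) (hLf : 0 < Lf) (hLg : 0 < Lg) (hL : L = max Lf Lg)
    (hθ : θ ≥ -1) (hη₁ : 0 < η₁) (hη₂ : 0 < η₂)
    (hη : 2 * η₂ < η₁) (hη' : η₁ < 4 - 2 * θ * η₂)
    (hs : 0 < s) (hs' : s < 2 / L)
    (hFconv : ConvexOn ℝ Set.univ F) (hGconv : ConvexOn ℝ Set.univ G)
    (hFgrad : ∀ x, HasGradientAt F (gF x) x)
    (hGgrad : ∀ y, HasGradientAt G (gG y) y)
    (hFlip : ∀ x y, ‖gF x - gF y‖ ≤ Lf * ‖x - y‖)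
    (hGlip : ∀ x y, ‖gG x - gG y‖ ≤ Lg * ‖x - y‖)
    (Q : WithLp 2 (EuclideanSpace ℝ (Fin n) × EuclideanSpace ℝ (Fin m)) →L[ℝ]
         WithLp 2 (EuclideanSpace ℝ (Fin n) × EuclideanSpace ℝ (Fin m)))
    (hQ : ∀ z, (WithLp.equiv 2 _) (Q z) =
      ((ContinuousLinearMap.adjoint A) ((WithLp.equiv 2 _) z).2, -(A ((WithLp.equiv 2 _) z).1)))
    (Iθ H M 𝓖 : WithLp 2 (EuclideanSpace ℝ (Fin n) × EuclideanSpace ℝ (Fin m)) →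
            WithLp 2 (EuclideanSpace ℝ (Fin n) × EuclideanSpace ℝ (Fin m)))
    (hIθ : ∀ z, Iθ z = (WithLp.equiv 2 _).symm (θ • ((WithLp.equiv 2 _) z).1, -((WithLp.equiv 2 _) z).2))
    (hH : ∀ z, H z = (WithLp.equiv 2 _).symm (gF ((WithLp.equiv 2 _) z).1, gG ((WithLp.equiv 2 _) z).2))
    (hM : ∀ z, M z = H z + Q z)
    (h𝓖 : ∀ z, 𝓖 z = -(M z) + (s / 2) • Q (η₁ • M z + (2 * η₂) • Iθ (M z)))
    (Zstar : WithLp 2 (EuclideanSpace ℝ (Fin n) × EuclideanSpace ℝ (Fin m)))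
    (hZstar : M Zstar = 0) :
    ∀ Z, -⟪Z - Zstar, 𝓖 Z⟫_ℝ ≥
      ((4 - η₁ - 2 * θ * η₂) / 4) * ⟪M Z, Z - Zstar⟫_ℝ
      + (s * (2 - s * L) / 4) * (η₁ - 2 * η₂) * ‖Q (Z - Zstar)‖ ^ 2 := by
  intro Z
  have hLpos : 0 < L := by
    rw [hL]; exact lt_max_of_lt_left hLf
  have hsL : s * L < 2 := (lt_div_iff₀ hLpos).mp hs'
  -- component formulas
  have hQ1 : ∀ z, (Q z).fst = ContinuousLinearMap.adjoint A z.snd := by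
    intro z
    have := congrArg Prod.fst (hQ z)
    simpa [WithLp.equiv_apply] using this
  have hQ2 : ∀ z, (Q z).snd = -(A z.fst) := by
    intro z
    have := congrArg Prod.snd (hQ z)
    simpa [WithLp.equiv_apply] using this
  have hM1 : ∀ z, (M z).fst = gF z.fst + ContinuousLinearMap.adjoint A z.snd := by
    intro z
    rw [hM z, WithLp.add_fst, hQ1, hH z]; rfl
  have hM2 : ∀ z, (M z).snd = gG z.snd - A z.fst := by
    intro z
    rw [hM z, WithLp.add_snd, hQ2, hH z,
      sub_eq_add_neg]; rfl
  have hI1 : ∀ z, (Iθ z).fst = θ • z.fst := by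
    intro z; rw [hIθ z]; rfl
  have hI2 : ∀ z, (Iθ z).snd = -z.snd := by
    intro z; rw [hIθ z]; rfl
  -- stationarity
  have hs1 : gF Zstar.fst + ContinuousLinearMap.adjoint A Zstar.snd = 0 := by
    rw [← hM1, hZstar, WithLp.zero_fst]
  have hs2 : gG Zstar.snd - A Zstar.fst = 0 := by
    rw [← hM2, hZstar, WithLp.zero_snd]
  -- abbreviations
  set x := Z.fst with hx
  set y := Z.snd with hy
  set xs := Zstar.fst with hxs
  set ys := Zstar.snd with hys
  set Df := gF x - gF xs with hDf
  set Dg := gG y - gG ys with hDg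
  set a := ContinuousLinearMap.adjoint A (y - ys) with ha
  set b := A (x - xs) with hb
  have hMZ1 : (M Z).fst = Df + a := by
    rw [hM1, hDf, ha, map_sub]
    have : gF x + ContinuousLinearMap.adjoint A y
        = (gF x - gF xs) + (ContinuousLinearMap.adjoint A y - ContinuousLinearMap.adjoint A ys)
          + (gF xs + ContinuousLinearMap.adjoint A ys) := by abel
    rw [this, hs1, add_zero]
  have hMZ2 : (M Z).snd = Dg - b := by
    rw [hM2, hDg, hb, map_sub]
    have : gG y - A x = (gG y - gG ys) - (A x - A xs) + (gG ys - A xs) := by abel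
    rw [this, hs2, add_zero]
  -- inner product on the product space
  have winner : ∀ u v : WithLp 2 (EuclideanSpace ℝ (Fin n) × EuclideanSpace ℝ (Fin m)),
      ⟪u, v⟫_ℝ = ⟪u.fst, v.fst⟫_ℝ + ⟪u.snd, v.snd⟫_ℝ := fun u v => rfl
  have hW1 : (Z - Zstar).fst = x - xs := WithLp.sub_fst Z Zstar
  have hW2 : (Z - Zstar).snd = y - ys := WithLp.sub_snd Z Zstar
  -- E1
  have E1 : ⟪M Z, Z - Zstar⟫_ℝ = ⟪Df, x - xs⟫_ℝ + ⟪Dg, y - ys⟫_ℝ := by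
    rw [winner, hW1, hW2, hMZ1, hMZ2]
    simp only [inner_add_left, inner_sub_left]
    have h1 : ⟪a, x - xs⟫_ℝ = ⟪y - ys, A (x - xs)⟫_ℝ := by
      rw [ha, ContinuousLinearMap.adjoint_inner_left]
    have h2 : ⟪b, y - ys⟫_ℝ = ⟪y - ys, A (x - xs)⟫_ℝ := by
      rw [hb, real_inner_comm]
    linarith [h1, h2]
  -- E2
  have E2 : ‖Q (Z - Zstar)‖ ^ 2 = ‖a‖ ^ 2 + ‖b‖ ^ 2 := by
    rw [← real_inner_self_eq_norm_sq, winner, hQ1, hQ2, hW1, hW2, ← ha, ← hb,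
      inner_neg_neg, real_inner_self_eq_norm_sq, real_inner_self_eq_norm_sq]
  -- E3
  have E3 : -⟪Z - Zstar, 𝓖 Z⟫_ℝ = ⟪Df, x - xs⟫_ℝ + ⟪Dg, y - ys⟫_ℝ
      + (s / 2) * ((η₁ + 2 * θ * η₂) * (⟪a, Df⟫_ℝ + ‖a‖ ^ 2)
        - (η₁ - 2 * η₂) * (⟪b, Dg⟫_ℝ - ‖b‖ ^ 2)) := by
    have hu1 : (η₁ • M Z + (2 * η₂) • Iθ (M Z)).fst = (η₁ + 2 * θ * η₂) • (M Z).fst := by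
      rw [WithLp.add_fst, WithLp.smul_fst, WithLp.smul_fst, hI1, add_smul, smul_smul]
      ring_nf
    have hu2 : (η₁ • M Z + (2 * η₂) • Iθ (M Z)).snd = (η₁ - 2 * η₂) • (M Z).snd := by
      rw [WithLp.add_snd, WithLp.smul_snd, WithLp.smul_snd, hI2, smul_neg, sub_smul]
      abel
    have hG1 : (𝓖 Z).fst = -(M Z).fst
        + (s / 2) • ((η₁ - 2 * η₂) • ContinuousLinearMap.adjoint A (M Z).snd) := by
      rw [h𝓖 Z, WithLp.add_fst, WithLp.neg_fst, WithLp.smul_fst, hQ1, hu2, map_smul]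
    have hG2 : (𝓖 Z).snd = -(M Z).snd
        + (s / 2) • (-((η₁ + 2 * θ * η₂) • A (M Z).fst)) := by
      rw [h𝓖 Z, WithLp.add_snd, WithLp.neg_snd, WithLp.smul_snd, hQ2, hu1, map_smul]
    rw [winner, hW1, hW2, hG1, hG2]
    rw [inner_add_right, inner_add_right, inner_neg_right, inner_neg_right,
      inner_smul_right, inner_smul_right, inner_smul_right, inner_neg_right,
      inner_smul_right]
    have k1 : ⟪x - xs, ContinuousLinearMap.adjoint A (M Z).snd⟫_ℝ = ⟪b, Dg⟫_ℝ - ‖b‖ ^ 2 := by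
      rw [ContinuousLinearMap.adjoint_inner_right, ← hb, hMZ2, inner_sub_right,
        real_inner_self_eq_norm_sq]
    have k2 : ⟪y - ys, A (M Z).fst⟫_ℝ = ⟪a, Df⟫_ℝ + ‖a‖ ^ 2 := by
      rw [← ContinuousLinearMap.adjoint_inner_left, ← ha, hMZ1, inner_add_right,
        real_inner_self_eq_norm_sq]
    have k3 : ⟪x - xs, (M Z).fst⟫_ℝ = ⟪Df, x - xs⟫_ℝ + ⟪a, x - xs⟫_ℝ := by
      rw [hMZ1, inner_add_right, real_inner_comm _ Df, real_inner_comm _ a]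
    have k4 : ⟪y - ys, (M Z).snd⟫_ℝ = ⟪Dg, y - ys⟫_ℝ - ⟪b, y - ys⟫_ℝ := by
      rw [hMZ2, inner_sub_right, real_inner_comm _ Dg, real_inner_comm _ b]
    have k5 : ⟪a, x - xs⟫_ℝ = ⟪b, y - ys⟫_ℝ := by
      rw [ha, hb, ContinuousLinearMap.adjoint_inner_left, real_inner_comm]
    rw [k1, k2, k3, k4, k5]
    ring
  -- cocoercivity bounds
  have hc1 := coco F gF Lf hLf hFconv hFgrad hFlip x xs
  have hc2 := coco G gG Lg hLg hGconv hGgrad hGlip y ys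
  have hT1pos : 0 ≤ ⟪Df, x - xs⟫_ℝ := by
    rw [hDf]; nlinarith [hc1, sq_nonneg ‖gF x - gF xs‖]
  have hT2pos : 0 ≤ ⟪Dg, y - ys⟫_ℝ := by
    rw [hDg]; nlinarith [hc2, sq_nonneg ‖gG y - gG ys‖]
  have hLfL : Lf ≤ L := hL ▸ le_max_left _ _
  have hLgL : Lg ≤ L := hL ▸ le_max_right _ _
  have hT1 : ‖Df‖ ^ 2 ≤ L * ⟪Df, x - xs⟫_ℝ := by
    rw [hDf] at hT1pos ⊢
    nlinarith [hc1, mul_le_mul_of_nonneg_right hLfL hT1pos]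
  have hT2 : ‖Dg‖ ^ 2 ≤ L * ⟪Dg, y - ys⟫_ℝ := by
    rw [hDg] at hT2pos ⊢
    nlinarith [hc2, mul_le_mul_of_nonneg_right hLgL hT2pos]
  have hCa : -(‖a‖ * ‖Df‖) ≤ ⟪a, Df⟫_ℝ := by
    have := real_inner_le_norm a (-Df)
    rw [inner_neg_right, norm_neg] at this
    linarith
  have hCb : ⟪b, Dg⟫_ℝ ≤ ‖b‖ * ‖Dg‖ := real_inner_le_norm b Dg
  have hβ : 0 < η₁ - 2 * η₂ := by linarith
  have hαβ : η₁ - 2 * η₂ ≤ η₁ + 2 * θ * η₂ := by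
    have h := mul_nonneg (show (0:ℝ) ≤ θ + 1 by linarith) hη₂.le
    nlinarith [h]
  have key := scalarIneq L s (η₁ + 2 * θ * η₂) (η₁ - 2 * η₂)
    ⟪Df, x - xs⟫_ℝ ⟪Dg, y - ys⟫_ℝ ‖Df‖ ‖Dg‖ ‖a‖ ‖b‖ ⟪a, Df⟫_ℝ ⟪b, Dg⟫_ℝ
    hLpos hs hsL hβ hαβ hT1 hT2 hCa hCb
  rw [ge_iff_le, E1, E2, E3]
  nlinarith [key]
end

section
/- In the same setting, if additionally A is invertible (so λ_min(QᵀQ) = σ_min(A)² > 0), then the solution of Z' = 𝓖(Z) satisfies ½‖Z(t) − Z*‖² ≤ ½‖Z₀ − Z*‖² · e^{−2t C₂ σ_min(A)²}, where C₂ = s(2 − sL)(η₁ − 2η₂)/4. -/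
open scoped InnerProductSpace
set_option synthInstance.maxHeartbeats 400000
open Set Topology Filter
open Set Topology Filter

variable {Hs : Type*} [NormedAddCommGroup Hs] [InnerProductSpace ℝ Hs] [CompleteSpace Hs]

lemma line_hasDerivAt (F : Hs → ℝ) (gF : Hs → Hs) (hF : ∀ p, HasGradientAt F (gF p) p)
    (x v : Hs) (t : ℝ) :
    HasDerivAt (fun t : ℝ => F (x + t • v)) ⟪gF (x + t • v), v⟫_ℝ t := by
  have hc : HasDerivAt (fun t : ℝ => x + t • v) v t := by
    simpa using ((hasDerivAt_id t).smul_const v).const_add x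
  have h := ((hF (x + t • v)).hasFDerivAt.comp_hasDerivAt t hc)
  exact h

lemma convex_grad_ineq (F : Hs → ℝ) (gF : Hs → Hs) (hconv : ConvexOn ℝ Set.univ F)
    (hF : ∀ p, HasGradientAt F (gF p) p) (x y : Hs) :
    F x + ⟪gF x, y - x⟫_ℝ ≤ F y := by
  set v := y - x with hv
  have hd : HasDerivAt (fun t : ℝ => F (x + t • v)) ⟪gF x, v⟫_ℝ 0 := by
    simpa using line_hasDerivAt F gF hF x v 0
  have hslope := hasDerivAt_iff_tendsto_slope.mp hd
  have hmono : (𝓝[>] (0:ℝ)) ≤ (𝓝[≠] (0:ℝ)) :=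
    nhdsWithin_mono 0 (fun u hu => ne_of_gt hu)
  have htend := hslope.mono_left hmono
  have hbound : ∀ᶠ t in 𝓝[>] (0:ℝ), slope (fun t : ℝ => F (x + t • v)) 0 t ≤ F y - F x := by
    filter_upwards [Ioc_mem_nhdsGT_of_mem (by constructor <;> norm_num : (0:ℝ) ∈ Ico (0:ℝ) 1)]
      with t ht
    have ht0 : 0 < t := ht.1
    have ht1 : t ≤ 1 := ht.2
    have hconvpt : F (x + t • v) ≤ (1 - t) * F x + t * F y := by
      have hmem : x + t • v = (1 - t) • x + t • y := by
        rw [hv]; module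
      rw [hmem]
      exact hconv.2 (mem_univ x) (mem_univ y) (by linarith) (le_of_lt ht0) (by ring)
    rw [slope_def_field]
    have : (F (x + t • v) - F x) / (t - 0) ≤ F y - F x := by
      rw [sub_zero, div_le_iff₀ ht0]
      nlinarith
    simpa [div_eq_inv_mul] using this
  have := le_of_tendsto htend hbound
  linarith

lemma descent_lemma (F : Hs → ℝ) (gF : Hs → Hs) (hF : ∀ p, HasGradientAt F (gF p) p)
    (Lf : ℝ) (hLf : 0 ≤ Lf) (hlip : ∀ a b, ‖gF a - gF b‖ ≤ Lf * ‖a - b‖) (x y : Hs) :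
    F y ≤ F x + ⟪gF x, y - x⟫_ℝ + Lf / 2 * ‖y - x‖ ^ 2 := by
  set v := y - x with hv
  have hgFcont : Continuous gF := by
    refine (LipschitzWith.of_dist_le_mul (K := Real.toNNReal Lf) ?_).continuous
    intro a b
    rw [dist_eq_norm, dist_eq_norm]
    calc ‖gF a - gF b‖ ≤ Lf * ‖a - b‖ := hlip a b
    _ ≤ Real.toNNReal Lf * ‖a - b‖ := by
        gcongr
        exact Real.le_coe_toNNReal Lf
  have hccurve : Continuous fun t : ℝ => x + t • v := by continuity
  have hφcont : Continuous fun t : ℝ => ⟪gF (x + t • v), v⟫_ℝ :=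
    (hgFcont.comp hccurve).inner continuous_const
  have hFTC : ∫ t in (0:ℝ)..1, ⟪gF (x + t • v), v⟫_ℝ = F (x + (1:ℝ) • v) - F (x + (0:ℝ) • v) := by
    exact intervalIntegral.integral_eq_sub_of_hasDerivAt
      (fun t _ => line_hasDerivAt F gF hF x v t) (hφcont.intervalIntegrable 0 1)
  have hmono : ∫ t in (0:ℝ)..1, ⟪gF (x + t • v), v⟫_ℝ
      ≤ ∫ t in (0:ℝ)..1, (⟪gF x, v⟫_ℝ + Lf * t * ‖v‖ ^ 2) := by
    refine intervalIntegral.integral_mono_on zero_le_one (hφcont.intervalIntegrable 0 1)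
      ((by continuity : Continuous fun t : ℝ => ⟪gF x, v⟫_ℝ + Lf * t * ‖v‖ ^ 2).intervalIntegrable 0 1) ?_
    intro t ht
    have h1 : ⟪gF (x + t • v), v⟫_ℝ - ⟪gF x, v⟫_ℝ = ⟪gF (x + t • v) - gF x, v⟫_ℝ := by
      rw [inner_sub_left]
    have h2 : ⟪gF (x + t • v) - gF x, v⟫_ℝ ≤ ‖gF (x + t • v) - gF x‖ * ‖v‖ :=
      real_inner_le_norm _ _
    have h3 : ‖gF (x + t • v) - gF x‖ ≤ Lf * ‖t • v‖ := by
      simpa using hlip (x + t • v) x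
    have h4 : ‖t • v‖ = t * ‖v‖ := by
      rw [norm_smul, Real.norm_eq_abs, abs_of_nonneg ht.1]
    rw [h4] at h3
    have h5 : ‖gF (x + t • v) - gF x‖ * ‖v‖ ≤ Lf * t * ‖v‖ ^ 2 := by
      nlinarith [norm_nonneg v]
    linarith
  have hrhs : ∫ t in (0:ℝ)..1, (⟪gF x, v⟫_ℝ + Lf * t * ‖v‖ ^ 2) = ⟪gF x, v⟫_ℝ + Lf / 2 * ‖v‖ ^ 2 := by
    rw [intervalIntegral.integral_add (intervalIntegrable_const)
      ((by continuity : Continuous fun t : ℝ => Lf * t * ‖v‖ ^ 2).intervalIntegrable 0 1)]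
    simp only [intervalIntegral.integral_const, smul_eq_mul]
    have : ∫ t in (0:ℝ)..1, Lf * t * ‖v‖ ^ 2 = Lf / 2 * ‖v‖ ^ 2 := by
      have : (fun t : ℝ => Lf * t * ‖v‖ ^ 2) = fun t : ℝ => (Lf * ‖v‖ ^ 2) * t := by
        funext t; ring
      rw [this, intervalIntegral.integral_const_mul, integral_id]
      ring
    rw [this]; ring_nf
  have hy' : x + (1:ℝ) • v = y := by rw [hv]; module
  have hx' : x + (0:ℝ) • v = x := by rw [hv]; module
  rw [hy', hx'] at hFTC
  rw [hrhs] at hmono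
  linarith [hFTC ▸ hmono]

lemma coco_one_sided (F : Hs → ℝ) (gF : Hs → Hs) (hconv : ConvexOn ℝ Set.univ F)
    (hF : ∀ p, HasGradientAt F (gF p) p)
    (Lf : ℝ) (hLf : 0 < Lf) (hlip : ∀ a b, ‖gF a - gF b‖ ≤ Lf * ‖a - b‖) (x y : Hs) :
    F x + ⟪gF x, y - x⟫_ℝ + 1 / (2 * Lf) * ‖gF y - gF x‖ ^ 2 ≤ F y := by
  set φ : Hs → ℝ := fun z => F z - ⟪gF x, z⟫_ℝ with hφ
  have hφconv : ConvexOn ℝ Set.univ φ := by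
    refine ⟨convex_univ, ?_⟩
    intro z _ w _ a b ha hb hab
    have h1 := hconv.2 (mem_univ z) (mem_univ w) ha hb hab
    simp only [smul_eq_mul] at h1
    simp only [hφ, smul_eq_mul]
    rw [inner_add_right, real_inner_smul_right, real_inner_smul_right]
    linarith
  have hφgrad : ∀ z, HasGradientAt φ (gF z - gF x) z := by
    intro z
    rw [hasGradientAt_iff_hasFDerivAt, map_sub]
    have h2 : HasFDerivAt (fun w => ⟪gF x, w⟫_ℝ)
        ((InnerProductSpace.toDual ℝ Hs (gF x) : Hs →L[ℝ] ℝ)) z := by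
      have := (InnerProductSpace.toDual ℝ Hs (gF x) : Hs →L[ℝ] ℝ).hasFDerivAt (x := z)
      convert this using 2
      simp [InnerProductSpace.toDual_apply_apply]
    exact ((hF z).hasFDerivAt.sub h2)
  have hφlip : ∀ a b, ‖(gF a - gF x) - (gF b - gF x)‖ ≤ Lf * ‖a - b‖ := by
    intro a b; simpa using hlip a b
  set u : Hs := gF y - gF x with hu
  set w : Hs := y - (1 / Lf) • u with hw
  have hmin : φ x ≤ φ w := by
    have := convex_grad_ineq φ (fun z => gF z - gF x) hφconv hφgrad x w
    simpa using this
  have hdesc : φ w ≤ φ y + ⟪gF y - gF x, w - y⟫_ℝ + Lf / 2 * ‖w - y‖ ^ 2 :=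
    descent_lemma φ (fun z => gF z - gF x) hφgrad Lf hLf.le
      (fun a b => by simpa using hlip a b) y w
  have hwy : w - y = -((1 / Lf) • u) := by rw [hw]; abel
  have hin : ⟪gF y - gF x, w - y⟫_ℝ = -(1 / Lf) * ‖u‖ ^ 2 := by
    rw [hwy, ← hu, inner_neg_right, real_inner_smul_right, real_inner_self_eq_norm_sq]
    ring
  have hnorm : ‖w - y‖ ^ 2 = (1 / Lf) ^ 2 * ‖u‖ ^ 2 := by
    rw [hwy, norm_neg, norm_smul, Real.norm_eq_abs, abs_of_nonneg (by positivity : (0:ℝ) ≤ 1 / Lf),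
      mul_pow]
  have hkey : φ x ≤ φ y - 1 / (2 * Lf) * ‖u‖ ^ 2 := by
    rw [hin, hnorm] at hdesc
    have := hmin.trans hdesc
    have hL : Lf ≠ 0 := ne_of_gt hLf
    calc φ x ≤ φ y + -(1 / Lf) * ‖u‖ ^ 2 + Lf / 2 * ((1 / Lf) ^ 2 * ‖u‖ ^ 2) := this
    _ = φ y - 1 / (2 * Lf) * ‖u‖ ^ 2 := by field_simp; ring
  simp only [hφ] at hkey
  have hsub : ⟪gF x, y⟫_ℝ - ⟪gF x, x⟫_ℝ = ⟪gF x, y - x⟫_ℝ := by rw [inner_sub_right]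
  linarith

lemma cocoercive (F : Hs → ℝ) (gF : Hs → Hs) (hconv : ConvexOn ℝ Set.univ F)
    (hF : ∀ p, HasGradientAt F (gF p) p)
    (Lf : ℝ) (hLf : 0 < Lf) (hlip : ∀ a b, ‖gF a - gF b‖ ≤ Lf * ‖a - b‖) (x y : Hs) :
    1 / Lf * ‖gF x - gF y‖ ^ 2 ≤ ⟪gF x - gF y, x - y⟫_ℝ := by
  have h1 := coco_one_sided F gF hconv hF Lf hLf hlip x y
  have h2 := coco_one_sided F gF hconv hF Lf hLf hlip y x
  have hnr : ‖gF x - gF y‖ = ‖gF y - gF x‖ := norm_sub_rev _ _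
  rw [hnr]
  have e1 : ⟪gF x, y - x⟫_ℝ = ⟪gF x, y⟫_ℝ - ⟪gF x, x⟫_ℝ := inner_sub_right _ _ _
  have e2 : ⟪gF y, x - y⟫_ℝ = ⟪gF y, x⟫_ℝ - ⟪gF y, y⟫_ℝ := inner_sub_right _ _ _
  have e3 : ⟪gF x - gF y, x - y⟫_ℝ
      = ⟪gF x, x⟫_ℝ - ⟪gF x, y⟫_ℝ - ⟪gF y, x⟫_ℝ + ⟪gF y, y⟫_ℝ := by
    rw [inner_sub_left, inner_sub_right, inner_sub_right]; ring
  have hnr2 : ‖gF x - gF y‖ = ‖gF y - gF x‖ := norm_sub_rev _ _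
  rw [hnr2] at h2
  have hL : Lf ≠ 0 := ne_of_gt hLf
  have : 1 / (2 * Lf) * ‖gF y - gF x‖ ^ 2 + 1 / (2 * Lf) * ‖gF y - gF x‖ ^ 2
      = 1 / Lf * ‖gF y - gF x‖ ^ 2 := by field_simp; ring
  linarith

set_option maxHeartbeats 1000000 in
lemma scalar_ineq (L s η₁ η₂ θ σ nx ny X1 X2 c1 c2 p r u v : ℝ)
    (hL : 0 < L) (hs : 0 < s) (hsL : s * L < 2)
    (hη₂ : 0 < η₂) (hθ : -1 ≤ θ) (hη : 2 * η₂ < η₁) (hη' : η₁ < 4 - 2 * θ * η₂)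
    (hp : 0 ≤ p) (hr : 0 ≤ r) (hu : 0 ≤ u) (hv : 0 ≤ v)
    (hX1 : u ^ 2 ≤ L * X1) (hX2 : v ^ 2 ≤ L * X2)
    (hc1 : -(p * u) ≤ c1) (hc2 : c2 ≤ r * v)
    (hp2 : σ ^ 2 * ny ^ 2 ≤ p ^ 2) (hr2 : σ ^ 2 * nx ^ 2 ≤ r ^ 2)
    (hσ : 0 < σ) :
    -X1 - X2 + s / 2 * (η₁ - 2 * η₂) * (c2 - r ^ 2) - s / 2 * (η₁ + 2 * η₂ * θ) * (c1 + p ^ 2)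
      ≤ -(s * (2 - s * L) * (η₁ - 2 * η₂) / 4 * σ ^ 2) * (nx ^ 2 + ny ^ 2) := by
  obtain ⟨a, ha_def⟩ : ∃ a, a = s * (η₁ + 2 * η₂ * θ) / 2 := ⟨_, rfl⟩
  obtain ⟨c, hc_def⟩ : ∃ c, c = s * (η₁ - 2 * η₂) / 2 := ⟨_, rfl⟩
  have hθ1 : (0:ℝ) ≤ η₂ * (θ + 1) := mul_nonneg hη₂.le (by linarith)
  have hc0 : 0 < c := by rw [hc_def]; nlinarith
  have ha0 : 0 < a := by rw [ha_def]; nlinarith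
  have hca : c ≤ a := by
    rw [ha_def, hc_def]
    nlinarith [mul_nonneg hs.le hθ1]
  have ha2s : a < 2 * s := by rw [ha_def]; nlinarith
  have hc2s : c < 2 * s := lt_of_le_of_lt hca ha2s
  have hk0 : 0 ≤ 1 - s * L / 2 := by linarith
  have young1' : L * (a * p * u) ≤ L * (X1 + a ^ 2 * L / 4 * p ^ 2) := by
    have hsq := sq_nonneg (u - a * L * p / 2)
    linarith [hsq, hX1]
  have young1 : a * p * u ≤ X1 + a ^ 2 * L / 4 * p ^ 2 := le_of_mul_le_mul_left young1' hL
  have young2' : L * (c * r * v) ≤ L * (X2 + c ^ 2 * L / 4 * r ^ 2) := by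
    have hsq := sq_nonneg (v - c * L * r / 2)
    linarith [hsq, hX2]
  have young2 : c * r * v ≤ X2 + c ^ 2 * L / 4 * r ^ 2 := le_of_mul_le_mul_left young2' hL
  have coef1 : a ^ 2 * L / 4 - a ≤ -(c * (1 - s * L / 2)) := by
    have h1 : 0 ≤ (a * L) * (2 * s - a) :=
      mul_nonneg (mul_nonneg ha0.le hL.le) (by linarith)
    have h2 : c * (1 - s * L / 2) ≤ a * (1 - s * L / 2) :=
      mul_le_mul_of_nonneg_right hca hk0
    linarith [h1, h2]
  have coef2 : c ^ 2 * L / 4 - c ≤ -(c * (1 - s * L / 2)) := by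
    have h1 : 0 ≤ (c * L) * (2 * s - c) :=
      mul_nonneg (mul_nonneg hc0.le hL.le) (by linarith)
    linarith [h1]
  have h1 : -(a * c1) ≤ a * (p * u) := by
    have := mul_le_mul_of_nonneg_left hc1 ha0.le
    linarith [this]
  have h2 : c * c2 ≤ c * (r * v) := mul_le_mul_of_nonneg_left hc2 hc0.le
  have e1 : (a ^ 2 * L / 4 - a) * p ^ 2 ≤ -(c * (1 - s * L / 2)) * p ^ 2 :=
    mul_le_mul_of_nonneg_right coef1 (sq_nonneg p)
  have e2 : (c ^ 2 * L / 4 - c) * r ^ 2 ≤ -(c * (1 - s * L / 2)) * r ^ 2 :=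
    mul_le_mul_of_nonneg_right coef2 (sq_nonneg r)
  have e3 : (c * (1 - s * L / 2)) * (σ ^ 2 * ny ^ 2) ≤ (c * (1 - s * L / 2)) * p ^ 2 :=
    mul_le_mul_of_nonneg_left hp2 (mul_nonneg hc0.le hk0)
  have e4 : (c * (1 - s * L / 2)) * (σ ^ 2 * nx ^ 2) ≤ (c * (1 - s * L / 2)) * r ^ 2 :=
    mul_le_mul_of_nonneg_left hr2 (mul_nonneg hc0.le hk0)
  have hLHS : -X1 - X2 + s / 2 * (η₁ - 2 * η₂) * (c2 - r ^ 2)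
      - s / 2 * (η₁ + 2 * η₂ * θ) * (c1 + p ^ 2)
      = -X1 - X2 + c * c2 - c * r ^ 2 - a * c1 - a * p ^ 2 := by
    rw [ha_def, hc_def]; ring
  have hRHS : -(s * (2 - s * L) * (η₁ - 2 * η₂) / 4 * σ ^ 2) * (nx ^ 2 + ny ^ 2)
      = -((c * (1 - s * L / 2)) * (σ ^ 2 * nx ^ 2)) - ((c * (1 - s * L / 2)) * (σ ^ 2 * ny ^ 2)) := by
    rw [hc_def]; ring
  rw [hLHS, hRHS]
  linarith [young1, young2, h1, h2, e1, e2, e3, e4]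

lemma prod_inner_apply' {E F : Type*} [NormedAddCommGroup E] [InnerProductSpace ℝ E]
    [NormedAddCommGroup F] [InnerProductSpace ℝ F] (x y : WithLp 2 (E × F)) :
    ⟪x, y⟫_ℝ = ⟪x.fst, y.fst⟫_ℝ + ⟪x.snd, y.snd⟫_ℝ := rfl

set_option maxHeartbeats 1000000 in
theorem stmt10 {n m : ℕ}
    (F : EuclideanSpace ℝ (Fin n) → ℝ) (G : EuclideanSpace ℝ (Fin m) → ℝ)
    (gF : EuclideanSpace ℝ (Fin n) → EuclideanSpace ℝ (Fin n))
    (gG : EuclideanSpace ℝ (Fin m) → EuclideanSpace ℝ (Fin m))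
    (A : EuclideanSpace ℝ (Fin n) →L[ℝ] EuclideanSpace ℝ (Fin m))
    (Lf Lg L s θ η₁ η₂ : ℝ) (hLf : 0 < Lf) (hLg : 0 < Lg) (hL : L = max Lf Lg)
    (hθ : θ ≥ -1) (hη₁ : 0 < η₁) (hη₂ : 0 < η₂)
    (hη : 2 * η₂ < η₁) (hη' : η₁ < 4 - 2 * θ * η₂)
    (hs : 0 < s) (hs' : s < 2 / L)
    (hFconv : ConvexOn ℝ Set.univ F) (hGconv : ConvexOn ℝ Set.univ G)
    (hFgrad : ∀ x, HasGradientAt F (gF x) x)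
    (hGgrad : ∀ y, HasGradientAt G (gG y) y)
    (hFlip : ∀ x y, ‖gF x - gF y‖ ≤ Lf * ‖x - y‖)
    (hGlip : ∀ x y, ‖gG x - gG y‖ ≤ Lg * ‖x - y‖)
    (Q : WithLp 2 (EuclideanSpace ℝ (Fin n) × EuclideanSpace ℝ (Fin m)) →L[ℝ]
         WithLp 2 (EuclideanSpace ℝ (Fin n) × EuclideanSpace ℝ (Fin m)))
    (hQ : ∀ z, (WithLp.equiv 2 _) (Q z) =
      ((ContinuousLinearMap.adjoint A) ((WithLp.equiv 2 _) z).2, -(A ((WithLp.equiv 2 _) z).1)))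
    (Iθ H M 𝓖 : WithLp 2 (EuclideanSpace ℝ (Fin n) × EuclideanSpace ℝ (Fin m)) →
            WithLp 2 (EuclideanSpace ℝ (Fin n) × EuclideanSpace ℝ (Fin m)))
    (hIθ : ∀ z, Iθ z = (WithLp.equiv 2 _).symm (θ • ((WithLp.equiv 2 _) z).1, -((WithLp.equiv 2 _) z).2))
    (hH : ∀ z, H z = (WithLp.equiv 2 _).symm (gF ((WithLp.equiv 2 _) z).1, gG ((WithLp.equiv 2 _) z).2))
    (hM : ∀ z, M z = H z + Q z)
    (h𝓖 : ∀ z, 𝓖 z = -(M z) + (s / 2) • Q (η₁ • M z + (2 * η₂) • Iθ (M z)))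
    (Zstar Z₀ : WithLp 2 (EuclideanSpace ℝ (Fin n) × EuclideanSpace ℝ (Fin m)))
    (hZstar : M Zstar = 0)
    (Z : ℝ → WithLp 2 (EuclideanSpace ℝ (Fin n) × EuclideanSpace ℝ (Fin m)))
    (hZ0 : Z 0 = Z₀)
    (hZ : ∀ t, HasDerivAt Z (𝓖 (Z t)) t)
    (σ : ℝ) (hσ : 0 < σ)
    (hAlow : ∀ x, σ * ‖x‖ ≤ ‖A x‖)
    (hAtlow : ∀ y, σ * ‖y‖ ≤ ‖(ContinuousLinearMap.adjoint A) y‖) :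
    ∀ t > (0 : ℝ),
      (1 / 2) * ‖Z t - Zstar‖ ^ 2 ≤
        (1 / 2) * ‖Z₀ - Zstar‖ ^ 2 *
          Real.exp (-2 * t * (s * (2 - s * L) * (η₁ - 2 * η₂) / 4) * σ ^ 2) := by
  have hL0 : 0 < L := by rw [hL]; exact lt_of_lt_of_le hLf (le_max_left _ _)
  have hLfL : Lf ≤ L := by rw [hL]; exact le_max_left _ _
  have hLgL : Lg ≤ L := by rw [hL]; exact le_max_right _ _
  have hsL : s * L < 2 := by
    have := (lt_div_iff₀ hL0).mp hs'
    linarith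
  set At := ContinuousLinearMap.adjoint A with hAt
  -- component formulas
  have hQ1 : ∀ w, (Q w).fst = At w.snd := fun w => congrArg Prod.fst (hQ w)
  have hQ2 : ∀ w, (Q w).snd = -(A w.fst) := fun w => congrArg Prod.snd (hQ w)
  have hI1 : ∀ w, (Iθ w).fst = θ • w.fst := fun w => by rw [hIθ]; rfl
  have hI2 : ∀ w, (Iθ w).snd = -w.snd := fun w => by rw [hIθ]; rfl
  have hH1 : ∀ w, (H w).fst = gF w.fst := fun w => by rw [hH]; rfl
  have hH2 : ∀ w, (H w).snd = gG w.snd := fun w => by rw [hH]; rfl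
  have hM1 : ∀ w, (M w).fst = gF w.fst + At w.snd := by
    intro w; rw [hM, WithLp.add_fst, hH1, hQ1]
  have hM2 : ∀ w, (M w).snd = gG w.snd - A w.fst := by
    intro w; rw [hM, WithLp.add_snd, hH2, hQ2]; abel
  have hstar1 : gF Zstar.fst + At Zstar.snd = 0 := by
    rw [← hM1]; rw [hZstar]; rfl
  have hstar2 : gG Zstar.snd - A Zstar.fst = 0 := by
    rw [← hM2]; rw [hZstar]; rfl
  -- key pointwise inequality
  have key : ∀ w, ⟪w - Zstar, 𝓖 w⟫_ℝ ≤
      -(s * (2 - s * L) * (η₁ - 2 * η₂) / 4 * σ ^ 2) * ‖w - Zstar‖ ^ 2 := by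
    intro w
    obtain ⟨ex, hex⟩ : ∃ ex, ex = w.fst - Zstar.fst := ⟨_, rfl⟩
    obtain ⟨ey, hey⟩ : ∃ ey, ey = w.snd - Zstar.snd := ⟨_, rfl⟩
    obtain ⟨hx, hhx⟩ : ∃ hx, hx = gF w.fst - gF Zstar.fst := ⟨_, rfl⟩
    obtain ⟨hy, hhy⟩ : ∃ hy, hy = gG w.snd - gG Zstar.snd := ⟨_, rfl⟩
    have hm1 : (M w).fst = hx + At ey := by
      rw [hM1, hhx, hey, map_sub]
      have : gF w.fst + At w.snd
          = gF w.fst - gF Zstar.fst + (At w.snd - At Zstar.snd)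
            + (gF Zstar.fst + At Zstar.snd) := by abel
      rw [this, hstar1, add_zero]
    have hm2 : (M w).snd = hy - A ex := by
      rw [hM2, hhy, hex, map_sub]
      have : gG w.snd - A w.fst
          = gG w.snd - gG Zstar.snd - (A w.fst - A Zstar.fst)
            + (gG Zstar.snd - A Zstar.fst) := by abel
      rw [this, hstar2, add_zero]
    have hGfst : (𝓖 w).fst = -(M w).fst + (s / 2 * (η₁ - 2 * η₂)) • At (M w).snd := by
      rw [h𝓖, WithLp.add_fst, WithLp.neg_fst, WithLp.smul_fst, hQ1, WithLp.add_snd,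
        WithLp.smul_snd, WithLp.smul_snd, hI2]
      rw [map_add, map_smul, map_smul, map_neg]
      module
    have hGsnd : (𝓖 w).snd = -(M w).snd - (s / 2 * (η₁ + 2 * η₂ * θ)) • A (M w).fst := by
      rw [h𝓖, WithLp.add_snd, WithLp.neg_snd, WithLp.smul_snd, hQ2, WithLp.add_fst,
        WithLp.smul_fst, WithLp.smul_fst, hI1]
      rw [map_add, map_smul, map_smul, map_smul]
      module
    obtain ⟨X1, hX1d⟩ : ∃ X1, X1 = ⟪ex, hx⟫_ℝ := ⟨_, rfl⟩
    obtain ⟨X2, hX2d⟩ : ∃ X2, X2 = ⟪ey, hy⟫_ℝ := ⟨_, rfl⟩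
    obtain ⟨c1, hc1d⟩ : ∃ c1, c1 = ⟪At ey, hx⟫_ℝ := ⟨_, rfl⟩
    obtain ⟨c2, hc2d⟩ : ∃ c2, c2 = ⟪A ex, hy⟫_ℝ := ⟨_, rfl⟩
    have i1 : ⟪ex, (M w).fst⟫_ℝ = X1 + ⟪A ex, ey⟫_ℝ := by
      rw [hm1, inner_add_right, ContinuousLinearMap.adjoint_inner_right, hX1d]
    have i2 : ⟪ex, At (M w).snd⟫_ℝ = c2 - ‖A ex‖ ^ 2 := by
      rw [ContinuousLinearMap.adjoint_inner_right, hm2, inner_sub_right,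
        real_inner_self_eq_norm_sq, hc2d]
    have i3 : ⟪ey, (M w).snd⟫_ℝ = X2 - ⟪ey, A ex⟫_ℝ := by
      rw [hm2, inner_sub_right, hX2d]
    have i4 : ⟪ey, A (M w).fst⟫_ℝ = c1 + ‖At ey‖ ^ 2 := by
      rw [← ContinuousLinearMap.adjoint_inner_left, hm1, inner_add_right,
        real_inner_self_eq_norm_sq, hc1d]
    have hTval : ⟪w - Zstar, 𝓖 w⟫_ℝ =
        -X1 - X2 + s / 2 * (η₁ - 2 * η₂) * (c2 - ‖A ex‖ ^ 2)
          - s / 2 * (η₁ + 2 * η₂ * θ) * (c1 + ‖At ey‖ ^ 2) := by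
      rw [prod_inner_apply', WithLp.sub_fst, WithLp.sub_snd, ← hex, ← hey,
        hGfst, hGsnd]
      rw [inner_add_right, inner_neg_right, real_inner_smul_right, i1, i2,
        inner_sub_right, inner_neg_right, real_inner_smul_right, i3, i4]
      rw [real_inner_comm (A ex) ey]
      ring
    have hnormsq : ‖w - Zstar‖ ^ 2 = ‖ex‖ ^ 2 + ‖ey‖ ^ 2 := by
      rw [← real_inner_self_eq_norm_sq, prod_inner_apply', WithLp.sub_fst,
        WithLp.sub_snd, ← hex, ← hey, real_inner_self_eq_norm_sq, real_inner_self_eq_norm_sq]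
    rw [hTval, hnormsq]
    -- scalar facts
    have hcoco1 : ‖hx‖ ^ 2 ≤ L * X1 := by
      have h := cocoercive F gF hFconv hFgrad Lf hLf hFlip w.fst Zstar.fst
      rw [← hhx, ← hex] at h
      rw [real_inner_comm] at h
      rw [← hX1d] at h
      have hX1nn : 0 ≤ X1 :=
        le_trans (mul_nonneg (one_div_pos.mpr hLf).le (sq_nonneg _)) h
      rw [one_div_mul_eq_div] at h
      have h' := (div_le_iff₀ hLf).mp h
      have h'' := mul_le_mul_of_nonneg_left hLfL hX1nn
      have e : X1 * Lf = Lf * X1 := by ring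
      have e2 : X1 * Lf ≤ X1 * L := h''
      linarith [mul_comm X1 L ▸ e2]
    have hcoco2 : ‖hy‖ ^ 2 ≤ L * X2 := by
      have h := cocoercive G gG hGconv hGgrad Lg hLg hGlip w.snd Zstar.snd
      rw [← hhy, ← hey] at h
      rw [real_inner_comm] at h
      rw [← hX2d] at h
      have hX2nn : 0 ≤ X2 :=
        le_trans (mul_nonneg (one_div_pos.mpr hLg).le (sq_nonneg _)) h
      rw [one_div_mul_eq_div] at h
      have h' := (div_le_iff₀ hLg).mp h
      have e2 : X2 * Lg ≤ X2 * L := mul_le_mul_of_nonneg_left hLgL hX2nn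
      linarith [mul_comm X2 L ▸ e2]
    have hc1b : -(‖At ey‖ * ‖hx‖) ≤ c1 := by
      rw [hc1d]
      have := abs_real_inner_le_norm (At ey) hx
      have h2 := neg_abs_le (⟪At ey, hx⟫_ℝ)
      linarith [abs_le.mp this]
    have hc2b : c2 ≤ ‖A ex‖ * ‖hy‖ := by
      rw [hc2d]; exact real_inner_le_norm _ _
    have hp2 : σ ^ 2 * ‖ey‖ ^ 2 ≤ ‖At ey‖ ^ 2 := by
      have h1 := mul_self_le_mul_self (mul_nonneg hσ.le (norm_nonneg ey)) (hAtlow ey)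
      have h2 : σ ^ 2 * ‖ey‖ ^ 2 = σ * ‖ey‖ * (σ * ‖ey‖) := by ring
      have h3 : ‖At ey‖ * ‖At ey‖ = ‖At ey‖ ^ 2 := by ring
      linarith
    have hr2 : σ ^ 2 * ‖ex‖ ^ 2 ≤ ‖A ex‖ ^ 2 := by
      have h1 := mul_self_le_mul_self (mul_nonneg hσ.le (norm_nonneg ex)) (hAlow ex)
      have h2 : σ ^ 2 * ‖ex‖ ^ 2 = σ * ‖ex‖ * (σ * ‖ex‖) := by ring
      have h3 : ‖A ex‖ * ‖A ex‖ = ‖A ex‖ ^ 2 := by ring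
      linarith
    exact scalar_ineq L s η₁ η₂ θ σ ‖ex‖ ‖ey‖ X1 X2 c1 c2 ‖At ey‖ ‖A ex‖ ‖hx‖ ‖hy‖
      hL0 hs hsL hη₂ hθ hη hη' (norm_nonneg _) (norm_nonneg _) (norm_nonneg _)
      (norm_nonneg _) hcoco1 hcoco2 hc1b hc2b hp2 hr2 hσ
  -- Gronwall
  obtain ⟨K, hK⟩ : ∃ K, K = 2 * (s * (2 - s * L) * (η₁ - 2 * η₂) / 4 * σ ^ 2) := ⟨_, rfl⟩
  have hN : ∀ τ : ℝ, HasDerivAt (fun t => ‖Z t - Zstar‖ ^ 2)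
      (2 * ⟪Z τ - Zstar, 𝓖 (Z τ)⟫_ℝ) τ := by
    intro τ
    have : ContinuousSMul ℝ (WithLp 2 (EuclideanSpace ℝ (Fin n) × EuclideanSpace ℝ (Fin m))) :=
      IsBoundedSMul.continuousSMul
    have h1 : HasDerivAt (fun t => Z t - Zstar) (𝓖 (Z τ)) τ := (hZ τ).sub_const _
    have h2 := h1.inner ℝ h1
    have heq : (fun t => ⟪Z t - Zstar, Z t - Zstar⟫_ℝ) = fun t => ‖Z t - Zstar‖ ^ 2 :=
      funext fun t => real_inner_self_eq_norm_sq _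
    rw [heq] at h2
    refine h2.congr_deriv ?_
    rw [real_inner_comm (𝓖 (Z τ)) (Z τ - Zstar)]
    ring
  set g : ℝ → ℝ := fun t => ‖Z t - Zstar‖ ^ 2 * Real.exp (K * t) with hg_def
  have hg : ∀ τ : ℝ, HasDerivAt g
      ((2 * ⟪Z τ - Zstar, 𝓖 (Z τ)⟫_ℝ + K * ‖Z τ - Zstar‖ ^ 2) * Real.exp (K * τ)) τ := by
    intro τ
    have he : HasDerivAt (fun t : ℝ => Real.exp (K * t)) (K * Real.exp (K * τ)) τ := by
      have h := (Real.hasDerivAt_exp (K * τ)).comp τ ((hasDerivAt_id τ).const_mul K)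
      exact h.congr_deriv (by ring)
    have := (hN τ).mul he
    refine this.congr_deriv ?_
    ring
  have hant : Antitone g := by
    apply antitone_of_deriv_nonpos
    · intro τ; exact ⟨_, (hg τ).hasFDerivAt⟩
    · intro τ
      rw [(hg τ).deriv]
      have hkey := key (Z τ)
      have h1 : 2 * ⟪Z τ - Zstar, 𝓖 (Z τ)⟫_ℝ + K * ‖Z τ - Zstar‖ ^ 2 ≤ 0 := by
        rw [hK]; linarith [key (Z τ)]
      have := mul_le_mul_of_nonneg_right h1 (Real.exp_pos (K * τ)).le
      linarith [this]
  intro t ht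
  have hgt : g t ≤ g 0 := hant ht.le
  have hg0 : g 0 = ‖Z₀ - Zstar‖ ^ 2 := by
    rw [hg_def]; simp [hZ0]
  rw [hg0] at hgt
  have hexp : (0:ℝ) < Real.exp (K * t) := Real.exp_pos _
  have hfin : ‖Z t - Zstar‖ ^ 2 ≤ ‖Z₀ - Zstar‖ ^ 2 * Real.exp (-(K * t)) := by
    rw [Real.exp_neg, ← div_eq_mul_inv, le_div_iff₀ hexp]
    exact hgt
  have hexp_eq : -(K * t) = -2 * t * (s * (2 - s * L) * (η₁ - 2 * η₂) / 4) * σ ^ 2 := by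
    rw [hK]; ring
  rw [hexp_eq] at hfin
  linarith
end

section
/- Let F be μ-strongly convex and differentiable, μ > 0, η > 0, s > 0 with 3η√(μs) < 1, and b = μ(1 − 3η√(μs))/(1 + (5/2)η√(μs)). Define 𝓔(x, w) = F(x) − F(x*) + (b/2)‖w − x*‖², where x* is the minimizer of F, and let 𝓖(x, w) = (√μ(1 − 3η√(μs))(w − x) − (3/2)η√s ∇F(x), (√μ/2)(2 + 5η√(μs))(x − w) − (1/(2√μ))(2 + 5η√(μs))∇F(x)). Then −⟨∇𝓔(x, w), 𝓖(x, w)⟩ ≥ √μ(1 − 3η√(μs)) 𝓔(x, w) + (3η√s/2)‖∇F(x)‖² for all (x, w). -/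
open scoped InnerProductSpace

lemma grad_lower {n : ℕ} (F : EuclideanSpace ℝ (Fin n) → ℝ)
    (gF : EuclideanSpace ℝ (Fin n) → EuclideanSpace ℝ (Fin n)) (μ : ℝ)
    (hsconv : StrongConvexOn Set.univ μ F)
    (hgrad : ∀ x, HasGradientAt F (gF x) x)
    (x y : EuclideanSpace ℝ (Fin n)) :
    F x + ⟪gF x, y - x⟫_ℝ + μ / 2 * ‖y - x‖ ^ 2 ≤ F y := by
  set G : EuclideanSpace ℝ (Fin n) → ℝ := fun z => F z - μ / 2 * ‖z‖ ^ 2 with hG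
  have hGconv : ConvexOn ℝ Set.univ G := strongConvexOn_iff_convex.mp hsconv
  set c : ℝ → EuclideanSpace ℝ (Fin n) := fun t => x + t • (y - x) with hc
  have hcderiv : ∀ t : ℝ, HasDerivAt c (y - x) t := fun t => by
    rw [hc]; simpa using ((hasDerivAt_id t).smul_const (y - x)).const_add x
  have hφconv : ConvexOn ℝ Set.univ (G ∘ c) := by
    have := hGconv.comp_affineMap (AffineMap.lineMap x y)
    have hcl : (G ∘ ⇑(AffineMap.lineMap x y : ℝ →ᵃ[ℝ] _)) = G ∘ c := by
      funext t
      simp only [Function.comp_apply, AffineMap.lineMap_apply, hc]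
      congr 1
      simp only [vsub_eq_sub, vadd_eq_add, smul_sub, neg_one_smul, smul_add, smul_neg]
      abel
    rw [← hcl]
    simpa [Set.preimage_univ] using this
  have hφderiv : HasDerivAt (G ∘ c)
      (⟪gF x, y - x⟫_ℝ - μ / 2 * (⟪x, y - x⟫_ℝ + ⟪y - x, x⟫_ℝ)) 0 := by
    have hF : HasDerivAt (fun t => F (c t)) ⟪gF (c 0), y - x⟫_ℝ 0 := by
      have := (hasGradientAt_iff_hasFDerivAt.mp (hgrad (c 0))).comp_hasDerivAt 0 (hcderiv 0)
      simp at this; exact this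
    have hN : HasDerivAt (fun t => ⟪c t, c t⟫_ℝ) (⟪c 0, y - x⟫_ℝ + ⟪y - x, c 0⟫_ℝ) 0 :=
      (hcderiv 0).inner ℝ (hcderiv 0)
    have hc0 : c 0 = x := by simp [hc]
    have h := hF.sub (hN.const_mul (μ / 2))
    have heq : (fun t => F (c t) - μ / 2 * ⟪c t, c t⟫_ℝ) = G ∘ c := by
      funext t; simp only [hG, Function.comp_apply, real_inner_self_eq_norm_sq]
    simp only [Pi.sub_def] at h; rw [heq] at h
    simpa [hc0] using h
  have hslope := hφconv.le_slope_of_hasDerivAt (Set.mem_univ (0:ℝ)) (Set.mem_univ (1:ℝ))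
    one_pos hφderiv
  have hc1 : c 1 = y := by simp [hc]
  have hc0 : c 0 = x := by simp [hc]
  have hs2 : slope (G ∘ c) 0 1 = G y - G x := by
    simp [slope_def_field, hc1, hc0, Function.comp]
  rw [hs2] at hslope
  have e1 : ⟪y - x, x⟫_ℝ = ⟪x, y - x⟫_ℝ := real_inner_comm _ _
  have e2 : ⟪x, y - x⟫_ℝ = ⟪x, y⟫_ℝ - ‖x‖ ^ 2 := by
    rw [inner_sub_right, real_inner_self_eq_norm_sq]
  have e3 : ‖y - x‖ ^ 2 = ‖y‖ ^ 2 - 2 * ⟪y, x⟫_ℝ + ‖x‖ ^ 2 := norm_sub_sq_real y x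
  have e4 : ⟪y, x⟫_ℝ = ⟪x, y⟫_ℝ := real_inner_comm _ _
  have hGy : G y = F y - μ / 2 * ‖y‖ ^ 2 := by rw [hG]
  have hGx : G x = F x - μ / 2 * ‖x‖ ^ 2 := by rw [hG]
  rw [hGy, hGx, e1, e2] at hslope
  rw [e3, e4]
  nlinarith [hslope]

theorem stmt15 {n : ℕ} (F : EuclideanSpace ℝ (Fin n) → ℝ)
    (gF : EuclideanSpace ℝ (Fin n) → EuclideanSpace ℝ (Fin n))
    (μ η s : ℝ) (hμ : 0 < μ) (hη : 0 < η) (hs : 0 < s)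
    (hsmall : 3 * η * Real.sqrt (μ * s) < 1)
    (hsconv : StrongConvexOn Set.univ μ F)
    (hgrad : ∀ x, HasGradientAt F (gF x) x)
    (xstar : EuclideanSpace ℝ (Fin n)) (hmin : ∀ x, F xstar ≤ F x) :
    ∀ x w : EuclideanSpace ℝ (Fin n),
      -(⟪gF x,
          (Real.sqrt μ * (1 - 3 * η * Real.sqrt (μ * s))) • (w - x)
            - ((3 / 2) * η * Real.sqrt s) • gF x⟫_ℝ
        + ⟪(μ * (1 - 3 * η * Real.sqrt (μ * s)) / (1 + (5 / 2) * η * Real.sqrt (μ * s))) • (w - xstar),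
            ((Real.sqrt μ / 2) * (2 + 5 * η * Real.sqrt (μ * s))) • (x - w)
              - ((1 / (2 * Real.sqrt μ)) * (2 + 5 * η * Real.sqrt (μ * s))) • gF x⟫_ℝ) ≥
      Real.sqrt μ * (1 - 3 * η * Real.sqrt (μ * s)) *
        (F x - F xstar
          + (μ * (1 - 3 * η * Real.sqrt (μ * s)) / (1 + (5 / 2) * η * Real.sqrt (μ * s))) / 2
            * ‖w - xstar‖ ^ 2)
      + (3 * η * Real.sqrt s / 2) * ‖gF x‖ ^ 2 := by
  intro x w
  set q := Real.sqrt (μ * s) with hqdef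
  set r := Real.sqrt μ with hrdef
  set b := μ * (1 - 3 * η * q) / (1 + (5 / 2) * η * q) with hbdef
  simp only [inner_sub_right, real_inner_smul_left, real_inner_smul_right,
    real_inner_self_eq_norm_sq]
  have hq0 : 0 < q := by rw [hqdef]; positivity
  have hr0 : 0 < r := by rw [hrdef]; positivity
  have hr2 : r ^ 2 = μ := by rw [hrdef]; exact Real.sq_sqrt hμ.le
  have h1t : 0 < 1 - 3 * η * q := by linarith
  have hden : 0 < 1 + 5 / 2 * η * q := by positivity
  have hbe : 1 / (2 * r) * (2 + 5 * η * q) * b = r * (1 - 3 * η * q) := by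
    rw [hbdef]; field_simp
    linear_combination (3 * η * q - 1) * hr2
  have hbd : r / 2 * (2 + 5 * η * q) * b = μ * (r * (1 - 3 * η * q)) := by
    rw [hbdef]; field_simp
  have hb0 : 0 ≤ b := by rw [hbdef]; positivity
  have hbμ : b ≤ μ := by
    rw [hbdef, div_le_iff₀ hden]; nlinarith [mul_pos (mul_pos hμ hη) hq0]
  have f1 : ⟪w - xstar, gF x⟫_ℝ =
      ⟪gF x, w⟫_ℝ - ⟪gF x, x⟫_ℝ + ⟪gF x, x - xstar⟫_ℝ := by
    rw [real_inner_comm, inner_sub_right, inner_sub_right]; ring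
  have f2 : b * ⟪w - xstar, x⟫_ℝ - b * ⟪w - xstar, w⟫_ℝ =
      b * ((‖x - xstar‖ ^ 2 - ‖x - w‖ ^ 2 - ‖w - xstar‖ ^ 2) / 2) := by
    rw [← mul_sub]
    congr 1
    have hx : x - xstar = (x - w) + (w - xstar) := by abel
    have hexp : ‖x - xstar‖ ^ 2 =
        ‖x - w‖ ^ 2 + 2 * ⟪x - w, w - xstar⟫_ℝ + ‖w - xstar‖ ^ 2 := by
      rw [hx]; exact norm_add_sq_real _ _
    have hcomm : ⟪x - w, w - xstar⟫_ℝ = ⟪w - xstar, x⟫_ℝ - ⟪w - xstar, w⟫_ℝ := by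
      rw [real_inner_comm, inner_sub_right]
    linarith
  have f3 : F x - F xstar + μ / 2 * ‖x - xstar‖ ^ 2 ≤ ⟪gF x, x - xstar⟫_ℝ := by
    have h := grad_lower F gF μ hsconv hgrad x xstar
    have h1 : ⟪gF x, xstar - x⟫_ℝ = -⟪gF x, x - xstar⟫_ℝ := by
      rw [inner_sub_right, inner_sub_right]; ring
    have h2 : ‖xstar - x‖ = ‖x - xstar‖ := norm_sub_rev _ _
    rw [h1, h2] at h
    linarith
  rw [f1, f2, ge_iff_le, ← sub_nonneg]
  have ha : 0 ≤ r * (1 - 3 * η * q) := by positivity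
  have expand : -(r * (1 - 3 * η * q) * (⟪gF x, w⟫_ℝ - ⟪gF x, x⟫_ℝ) - 3 / 2 * η * √s * ‖gF x‖ ^ 2 +
        (r / 2 * (2 + 5 * η * q) * (b * ((‖x - xstar‖ ^ 2 - ‖x - w‖ ^ 2 - ‖w - xstar‖ ^ 2) / 2)) -
          1 / (2 * r) * (2 + 5 * η * q) *
            (b * (⟪gF x, w⟫_ℝ - ⟪gF x, x⟫_ℝ + ⟪gF x, x - xstar⟫_ℝ)))) -
      (r * (1 - 3 * η * q) * (F x - F xstar + b / 2 * ‖w - xstar‖ ^ 2) + 3 * η * √s / 2 * ‖gF x‖ ^ 2)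
      = r * (1 - 3 * η * q) *
          (⟪gF x, x - xstar⟫_ℝ - (F x - F xstar + μ / 2 * ‖x - xstar‖ ^ 2))
        + r * (1 - 3 * η * q) * μ / 2 * ‖x - w‖ ^ 2
        + r * (1 - 3 * η * q) * (μ - b) / 2 * ‖w - xstar‖ ^ 2 := by
    linear_combination (⟪gF x, w⟫_ℝ - ⟪gF x, x⟫_ℝ + ⟪gF x, x - xstar⟫_ℝ) * hbe
      - ((‖x - xstar‖ ^ 2 - ‖x - w‖ ^ 2 - ‖w - xstar‖ ^ 2) / 2) * hbd
  rw [expand]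
  have t1 : 0 ≤ r * (1 - 3 * η * q) *
      (⟪gF x, x - xstar⟫_ℝ - (F x - F xstar + μ / 2 * ‖x - xstar‖ ^ 2)) :=
    mul_nonneg ha (by linarith)
  have t2 : 0 ≤ r * (1 - 3 * η * q) * μ / 2 * ‖x - w‖ ^ 2 := by positivity
  have t3 : 0 ≤ r * (1 - 3 * η * q) * (μ - b) / 2 * ‖w - xstar‖ ^ 2 := by
    apply mul_nonneg _ (sq_nonneg _)
    apply div_nonneg _ (by norm_num)
    exact mul_nonneg ha (by linarith)
  linarith
end
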